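/- arXiv:1307.3794 — 2 statements merged into one kernel-verified Lean document; each statement's English description precedes it below -/
import Mathlib

section
/- Define C₂(x) = (d + b₁c₁)/(c₁ + c₂ + x/μ₂) for x ≥ 0 with parameters δ = 19/31, λ = 4√2 − 1, c₁ = δ/v, c₂ = (1−δ)/v, μ₂ = 2λv², b₁ = (λ+2)v, d = 2(λ+2), v > 0. Then C₂(x) + x ≥ 2v(5√2 + 1) for all x ≥ 0, with equality if and only if x = v(√2 + 2). -/
/-! The delay simplifies to `C₂ x = K / (x + a)` with `a = 2λv` and `K = 162 v² = (m + a)²` for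
`m = v(√2 + 2)`, the constants being tuned so that `λ(λ + 2) = 31`. For such a function the
completed square `K / (x + a) + x = 2m + a + (x - m)² / (x + a)` gives the minimum `2m + a`,
attained exactly at `x = m`. -/

open Real

theorem sq_div_add_eq_add_sq_div {a m x : ℝ} (h : x + a ≠ 0) :
    (m + a) ^ 2 / (x + a) + x = 2 * m + a + (x - m) ^ 2 / (x + a) := by
  field_simp
  ring

theorem two_mul_add_le_sq_div_add {a m x : ℝ} (h : 0 < x + a) :
    2 * m + a ≤ (m + a) ^ 2 / (x + a) + x := by
  rw [sq_div_add_eq_add_sq_div h.ne']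
  have : 0 ≤ (x - m) ^ 2 / (x + a) := div_nonneg (sq_nonneg _) h.le
  linarith

theorem sq_div_add_eq_iff {a m x : ℝ} (h : 0 < x + a) :
    (m + a) ^ 2 / (x + a) + x = 2 * m + a ↔ x = m := by
  rw [sq_div_add_eq_add_sq_div h.ne', add_eq_left, div_eq_zero_iff, or_iff_left h.ne',
    sq_eq_zero_iff, sub_eq_zero]

theorem dipole_delay_eq {δ lam v x : ℝ} (hlam : lam ≠ 0) (hv : v ≠ 0) :
    (2 * (lam + 2) + (lam + 2) * v * (δ / v)) / (δ / v + (1 - δ) / v + x / (2 * lam * v ^ 2)) =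
      2 * lam * (lam + 2) * (2 + δ) * v ^ 2 / (x + 2 * lam * v) := by
  have hden :
      δ / v + (1 - δ) / v + x / (2 * lam * v ^ 2) = (x + 2 * lam * v) / (2 * lam * v ^ 2) := by
    field_simp
    ring
  rw [hden, div_div_eq_mul_div]
  congr 1
  field_simp

theorem stmt_10 (v : ℝ) (hv : 0 < v)
    (δ lam c₁ c₂ μ₂ b₁ d : ℝ)
    (hδ : δ = 19 / 31) (hlam : lam = 4 * Real.sqrt 2 - 1)
    (hc₁ : c₁ = δ / v) (hc₂ : c₂ = (1 - δ) / v) (hμ₂ : μ₂ = 2 * lam * v ^ 2)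
    (hb₁ : b₁ = (lam + 2) * v) (hd : d = 2 * (lam + 2))
    (C₂ : ℝ → ℝ)
    (hC₂ : ∀ x, C₂ x = (d + b₁ * c₁) / (c₁ + c₂ + x / μ₂)) :
    ∀ x : ℝ, 0 ≤ x →
      C₂ x + x ≥ 2 * v * (5 * Real.sqrt 2 + 1) ∧
      (C₂ x + x = 2 * v * (5 * Real.sqrt 2 + 1) ↔ x = v * (Real.sqrt 2 + 2)) := by
  intro x hx
  subst hd hb₁ hc₁ hc₂ hμ₂
  have hsq : √2 ^ 2 = 2 := sq_sqrt zero_le_two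
  have hlam_pos : 0 < lam := by linarith [one_lt_sqrt_two]
  have hpos : 0 < x + 2 * lam * v := by positivity
  set m := v * (√2 + 2)
  have hC : C₂ x = (m + 2 * lam * v) ^ 2 / (x + 2 * lam * v) := by
    rw [hC₂, dipole_delay_eq hlam_pos.ne' hv.ne']
    congr 1
    subst hlam hδ
    linear_combination (81 / 31 * v ^ 2) * hsq
  have hmin : 2 * v * (5 * √2 + 1) = 2 * m + 2 * lam * v := by
    rw [hlam]
    ring
  rw [hC, hmin]
  exact ⟨two_mul_add_le_sq_div_add hpos, sq_div_add_eq_iff hpos⟩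
end

section
/- Let G be a two-terminal series-parallel graph with increasing edge delay functions l_e, let f be the Wardrop equilibrium flow of value d > 0, and let g be any s–t flow of value d. Then max over paths p with f_p > 0 of l_p(f) is at most max over paths p with g_p > 0 of l_p(g). -/
/-- Two-terminal series-parallel graphs, built from single edges by
series and parallel composition. -/
inductive SPG : Type where
  | edge : SPG
  | series : SPG → SPG → SPG
  | parallel : SPG → SPG → SPG

namespace SPG

/-- The edges of a series-parallel graph. -/
def E : SPG → Type
  | .edge => Unit
  | .series G₁ G₂ => G₁.E ⊕ G₂.E
  | .parallel G₁ G₂ => G₁.E ⊕ G₂.E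

/-- The s-t paths of a series-parallel graph. -/
def Path : SPG → Type
  | .edge => Unit
  | .series G₁ G₂ => G₁.Path × G₂.Path
  | .parallel G₁ G₂ => G₁.Path ⊕ G₂.Path

/-- Whether an edge lies on a path. -/
def onPath : (G : SPG) → G.Path → G.E → Prop
  | .edge, _, _ => True
  | .series _ _, p, .inl e => onPath _ p.1 e
  | .series _ _, p, .inr e => onPath _ p.2 e
  | .parallel _ _, .inl p, .inl e => onPath _ p e
  | .parallel _ _, .inl _, .inr _ => False
  | .parallel _ _, .inr _, .inl _ => False
  | .parallel _ _, .inr p, .inr e => onPath _ p e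

/-- `IsFlow G f d`: `f` is a (nonnegative) s-t flow of value `d` on `G`. -/
def IsFlow : (G : SPG) → (G.E → ℝ) → ℝ → Prop
  | .edge, f, d => f () = d ∧ 0 ≤ d
  | .series G₁ G₂, f, d => IsFlow G₁ (f ∘ Sum.inl) d ∧ IsFlow G₂ (f ∘ Sum.inr) d
  | .parallel G₁ G₂, f, d => ∃ d₁ d₂ : ℝ, d₁ + d₂ = d ∧
      IsFlow G₁ (f ∘ Sum.inl) d₁ ∧ IsFlow G₂ (f ∘ Sum.inr) d₂

/-- The delay of a path: sum of the edge delays `l e (f e)` over edges on the path. -/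
def pathDelay : (G : SPG) → (G.E → ℝ → ℝ) → (G.E → ℝ) → G.Path → ℝ
  | .edge, l, f, _ => l () (f ())
  | .series _ _, l, f, p =>
      pathDelay _ (l ∘ Sum.inl) (f ∘ Sum.inl) p.1 + pathDelay _ (l ∘ Sum.inr) (f ∘ Sum.inr) p.2
  | .parallel _ _, l, f, .inl p => pathDelay _ (l ∘ Sum.inl) (f ∘ Sum.inl) p
  | .parallel _ _, l, f, .inr p => pathDelay _ (l ∘ Sum.inr) (f ∘ Sum.inr) p

/-- A path carries positive flow if every edge on it has positive flow. -/
def usedBy (G : SPG) (f : G.E → ℝ) (p : G.Path) : Prop :=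
  ∀ e : G.E, G.onPath p e → 0 < f e

/-- Wardrop equilibrium: every path carrying positive flow has minimum delay. -/
def IsWardrop (G : SPG) (l : G.E → ℝ → ℝ) (f : G.E → ℝ) : Prop :=
  ∀ p : G.Path, G.usedBy f p → ∀ q : G.Path, G.pathDelay l f p ≤ G.pathDelay l f q

end SPG

lemma SPG.flow_nonneg : ∀ (G : SPG) (f : G.E → ℝ) (d : ℝ), G.IsFlow f d → 0 ≤ d
  | .edge, _, _, h => h.2
  | .series G₁ _, _, d, h => SPG.flow_nonneg G₁ _ d h.1
  | .parallel G₁ G₂, _, _, h => by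
      obtain ⟨d₁, d₂, hsum, h₁, h₂⟩ := h
      have := SPG.flow_nonneg G₁ _ _ h₁
      have := SPG.flow_nonneg G₂ _ _ h₂
      linarith

/-- Key lemma: if `g` has value at least that of `f` and positive value, then there is a
path used by `g` on which `g` dominates `f` edgewise. -/
lemma SPG.exists_dominating : ∀ (G : SPG) (f g : G.E → ℝ) (df dg : ℝ),
    df ≤ dg → 0 < dg → G.IsFlow f df → G.IsFlow g dg →
    ∃ q : G.Path, G.usedBy g q ∧ ∀ e, G.onPath q e → f e ≤ g e
  | .edge, f, g, df, dg, hle, hpos, hf, hg => by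
      refine ⟨(), fun e _ => ?_, fun e _ => ?_⟩
      · have : g () = dg := hg.1
        cases e; rw [this]; exact hpos
      · cases e; rw [hf.1, hg.1]; exact hle
  | .series G₁ G₂, f, g, df, dg, hle, hpos, hf, hg => by
      obtain ⟨q₁, hu₁, hd₁⟩ :=
        SPG.exists_dominating G₁ (f ∘ Sum.inl) (g ∘ Sum.inl) df dg hle hpos hf.1 hg.1
      obtain ⟨q₂, hu₂, hd₂⟩ :=
        SPG.exists_dominating G₂ (f ∘ Sum.inr) (g ∘ Sum.inr) df dg hle hpos hf.2 hg.2
      refine ⟨(q₁, q₂), fun e he => ?_, fun e he => ?_⟩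
      · cases e with
        | inl e => exact hu₁ e he
        | inr e => exact hu₂ e he
      · cases e with
        | inl e => exact hd₁ e he
        | inr e => exact hd₂ e he
  | .parallel G₁ G₂, f, g, df, dg, hle, hpos, hf, hg => by
      obtain ⟨d₁, d₂, hdsum, hf₁, hf₂⟩ := hf
      obtain ⟨e₁, e₂, hesum, hg₁, hg₂⟩ := hg
      have hd₁ := SPG.flow_nonneg G₁ _ _ hf₁
      have hd₂ := SPG.flow_nonneg G₂ _ _ hf₂
      have he₁ := SPG.flow_nonneg G₁ _ _ hg₁
      have he₂ := SPG.flow_nonneg G₂ _ _ hg₂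
      by_cases hcase : 0 < e₁ ∧ d₁ ≤ e₁
      · obtain ⟨q, hu, hdom⟩ :=
          SPG.exists_dominating G₁ (f ∘ Sum.inl) (g ∘ Sum.inl) d₁ e₁ hcase.2 hcase.1 hf₁ hg₁
        refine ⟨Sum.inl q, fun e he => ?_, fun e he => ?_⟩
        · cases e with
          | inl e => exact hu e he
          | inr e => exact absurd he (by exact id)
        · cases e with
          | inl e => exact hdom e he
          | inr e => exact absurd he (by exact id)
      · have hcase2 : 0 < e₂ ∧ d₂ ≤ e₂ := by
          push_neg at hcase
          constructor
          · by_contra h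
            have he₁0 : e₂ ≤ 0 := le_of_not_gt h
            have : e₂ = 0 := le_antisymm he₁0 he₂
            by_cases h1 : 0 < e₁
            · have := hcase h1; linarith
            · have : e₁ = 0 := le_antisymm (le_of_not_gt h1) he₁
              linarith
          · by_contra h
            push_neg at h
            by_cases h1 : 0 < e₁
            · have := hcase h1; linarith
            · have : e₁ = 0 := le_antisymm (le_of_not_gt h1) he₁
              linarith
        obtain ⟨q, hu, hdom⟩ :=
          SPG.exists_dominating G₂ (f ∘ Sum.inr) (g ∘ Sum.inr) d₂ e₂ hcase2.2 hcase2.1 hf₂ hg₂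
        refine ⟨Sum.inr q, fun e he => ?_, fun e he => ?_⟩
        · cases e with
          | inl e => exact absurd he (by exact id)
          | inr e => exact hu e he
        · cases e with
          | inl e => exact absurd he (by exact id)
          | inr e => exact hdom e he

lemma SPG.pathDelay_mono : ∀ (G : SPG) (l : G.E → ℝ → ℝ), (∀ e, Monotone (l e)) →
    ∀ (f g : G.E → ℝ) (q : G.Path), (∀ e, G.onPath q e → f e ≤ g e) →
    G.pathDelay l f q ≤ G.pathDelay l g q
  | .edge, l, hl, f, g, q, h => hl () (h () trivial)
  | .series G₁ G₂, l, hl, f, g, q, h => by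
      have h₁ := SPG.pathDelay_mono G₁ (l ∘ Sum.inl) (fun e => hl (Sum.inl e))
        (f ∘ Sum.inl) (g ∘ Sum.inl) q.1 (fun e he => h (Sum.inl e) he)
      have h₂ := SPG.pathDelay_mono G₂ (l ∘ Sum.inr) (fun e => hl (Sum.inr e))
        (f ∘ Sum.inr) (g ∘ Sum.inr) q.2 (fun e he => h (Sum.inr e) he)
      exact add_le_add h₁ h₂
  | .parallel G₁ G₂, l, hl, f, g, .inl q, h =>
      SPG.pathDelay_mono G₁ (l ∘ Sum.inl) (fun e => hl (Sum.inl e))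
        (f ∘ Sum.inl) (g ∘ Sum.inl) q (fun e he => h (Sum.inl e) he)
  | .parallel G₁ G₂, l, hl, f, g, .inr q, h =>
      SPG.pathDelay_mono G₂ (l ∘ Sum.inr) (fun e => hl (Sum.inr e))
        (f ∘ Sum.inr) (g ∘ Sum.inr) q (fun e he => h (Sum.inr e) he)

theorem stmt_14 (G : SPG) (l : G.E → ℝ → ℝ) (hl : ∀ e, StrictMono (l e))
    (f g : G.E → ℝ) (d : ℝ) (hd : 0 < d)
    (hf : G.IsFlow f d) (hfeq : G.IsWardrop l f) (hg : G.IsFlow g d) :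
    ∀ p : G.Path, G.usedBy f p →
      ∃ q : G.Path, G.usedBy g q ∧ G.pathDelay l f p ≤ G.pathDelay l g q := by
  intro p hp
  obtain ⟨q, hq, hdom⟩ := SPG.exists_dominating G f g d d le_rfl hd hf hg
  refine ⟨q, hq, le_trans (hfeq p hp q) ?_⟩
  exact SPG.pathDelay_mono G l (fun e => (hl e).monotone) f g q hdom
end
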